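/- Let P = (1/100)·P₁ + (99/100)·P₂ where P₁ is uniform on [0,1/3] and P₂ is uniform on [2/3,1]. Then the optimal set of three-means for P is {1/6, 3/4, 11/12}, with quantization error V₃ = 103/43200. -/

import Mathlib

/-!
Pointwise, `min_{c ∈ γ} (x - c)² ≥ r² - ∑_c max (r² - (x - c)², 0)`, and on `[p, q]` only the
centres within distance `r` of `[p, q]` contribute to the sum. Each parabolic bump has integral
`4r³/3`, so if at most `k` centres lie that close, the error on `[p, q]` is at least
`(q - p) r² - 4k r³/3`. Split a codebook of at most three points at `7/12` and choose the radius
according to how many points lie on each side: every case gives at least `103/43200`. The case of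
one point on the left is tight, and `{1/6, 3/4, 11/12}` attains the bound.
-/

open MeasureTheory Set

noncomputable def unif (a b : ℝ) : Measure ℝ :=
  (ENNReal.ofReal (b - a))⁻¹ • (volume.restrict (Icc a b))

noncomputable def mix (p : ℝ) (P₁ P₂ : Measure ℝ) : Measure ℝ :=
  ENNReal.ofReal p • P₁ + ENNReal.ofReal (1 - p) • P₂

noncomputable def distortion (P : Measure ℝ) (γ : Finset ℝ) : ℝ :=
  ∫ x, sInf ((fun c => (x - c) ^ 2) '' (γ : Set ℝ)) ∂P

noncomputable def quantErr (P : Measure ℝ) (n : ℕ) : ℝ :=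
  sInf { v | ∃ γ : Finset ℝ, γ.Nonempty ∧ γ.card ≤ n ∧ v = distortion P γ }

def IsOptimal (P : Measure ℝ) (n : ℕ) (γ : Finset ℝ) : Prop :=
  γ.Nonempty ∧ γ.card ≤ n ∧ distortion P γ = quantErr P n

open scoped Finset

noncomputable def parabolicBump (r c x : ℝ) : ℝ := max (r ^ 2 - (x - c) ^ 2) 0

lemma parabolicBump_nonneg (r c x : ℝ) : 0 ≤ parabolicBump r c x := le_max_right _ _

lemma sub_sq_le_parabolicBump (r c x : ℝ) : r ^ 2 - (x - c) ^ 2 ≤ parabolicBump r c x :=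
  le_max_left _ _

@[fun_prop]
lemma continuous_parabolicBump (r c : ℝ) : Continuous (parabolicBump r c) := by
  unfold parabolicBump; fun_prop

lemma parabolicBump_eq_zero {r c x : ℝ} (hr : 0 ≤ r) (hx : x ∉ Ioo (c - r) (c + r)) :
    parabolicBump r c x = 0 := by
  simp only [Set.mem_Ioo, not_and_or, not_lt] at hx
  refine max_eq_right ?_
  rcases hx with hx | hx <;> nlinarith

lemma integrable_parabolicBump {r : ℝ} (hr : 0 ≤ r) (c : ℝ) : Integrable (parabolicBump r c) :=
  (continuous_parabolicBump r c).integrable_of_hasCompactSupport <|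
    HasCompactSupport.intro (isCompact_Icc (a := c - r) (b := c + r)) fun _ hx =>
      parabolicBump_eq_zero hr fun h => hx (Ioo_subset_Icc_self h)

lemma integral_parabolicBump {r : ℝ} (hr : 0 ≤ r) (c : ℝ) :
    ∫ x, parabolicBump r c x = 4 / 3 * r ^ 3 := by
  rw [← setIntegral_eq_integral_of_forall_compl_eq_zero (s := Ioc (c - r) (c + r))
      fun x hx => parabolicBump_eq_zero hr fun h => hx (Ioo_subset_Ioc_self h),
    ← intervalIntegral.integral_of_le (by linarith)]
  have hbump :
      EqOn (parabolicBump r c) (fun x => r ^ 2 - (x - c) ^ 2) (uIcc (c - r) (c + r)) := by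
    intro x hx
    rw [Set.uIcc_of_le (by linarith)] at hx
    exact max_eq_left (by nlinarith [hx.1, hx.2])
  rw [intervalIntegral.integral_congr hbump,
    intervalIntegral.integral_sub intervalIntegrable_const
      (by apply Continuous.intervalIntegrable; fun_prop),
    intervalIntegral.integral_comp_sub_right (fun x => x ^ 2), integral_pow]
  simp only [intervalIntegral.integral_const, smul_eq_mul]
  ring

lemma integral_parabolicBump_le {r : ℝ} (hr : 0 ≤ r) (c : ℝ) {p q : ℝ} (hpq : p ≤ q) :
    ∫ x in p..q, parabolicBump r c x ≤ 4 / 3 * r ^ 3 := by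
  rw [intervalIntegral.integral_of_le hpq, ← integral_parabolicBump hr c]
  exact setIntegral_le_integral (integrable_parabolicBump hr c)
    (Filter.Eventually.of_forall (parabolicBump_nonneg r c))

section

variable {S : Finset ℝ} (hS : S.Nonempty)

lemma continuous_inf'_sq_sub :
    Continuous fun x : ℝ => S.inf' hS (fun c => (x - c) ^ 2) :=
  Continuous.finset_inf'_apply hS fun _ _ => by fun_prop

lemma sq_sub_sum_parabolicBump_le_inf' {T : Finset ℝ} {p q r x : ℝ} (hr : 0 ≤ r)
    (hx : x ∈ Icc p q) (hT : ∀ c ∈ S, p - r < c → c < q + r → c ∈ T) :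
    r ^ 2 - ∑ c ∈ T, parabolicBump r c x ≤ S.inf' hS (fun c => (x - c) ^ 2) := by
  obtain ⟨c, hcS, hc⟩ := S.exists_mem_eq_inf' hS (fun c => (x - c) ^ 2)
  rw [hc]
  by_cases hfar : r ^ 2 ≤ (x - c) ^ 2
  · linarith [Finset.sum_nonneg fun c (_ : c ∈ T) => parabolicBump_nonneg r c x]
  · have hcr : |x - c| < r := abs_lt_of_sq_lt_sq (not_le.1 hfar) hr
    rw [abs_lt] at hcr
    have hcT : c ∈ T := hT c hcS (by linarith [hx.1]) (by linarith [hx.2])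
    linarith [Finset.single_le_sum (fun c _ => parabolicBump_nonneg r c x) hcT,
      sub_sq_le_parabolicBump r c x]

lemma le_integral_inf'_sq_sub {T : Finset ℝ} {p q r : ℝ} {k : ℕ} (hpq : p ≤ q) (hr : 0 ≤ r)
    (hT : ∀ c ∈ S, p - r < c → c < q + r → c ∈ T) (hk : #T ≤ k) :
    (q - p) * r ^ 2 - 4 / 3 * k * r ^ 3 ≤ ∫ x in p..q, S.inf' hS (fun c => (x - c) ^ 2) := by
  have hbumps : ∀ c ∈ T, IntervalIntegrable (parabolicBump r c) volume p q :=
    fun c _ => (continuous_parabolicBump r c).intervalIntegrable p q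
  have hk' : (#T : ℝ) ≤ k := by exact_mod_cast hk
  calc (q - p) * r ^ 2 - 4 / 3 * k * r ^ 3
      ≤ (q - p) * r ^ 2 - ∑ _c ∈ T, 4 / 3 * r ^ 3 := by
        rw [Finset.sum_const, nsmul_eq_mul]; nlinarith [pow_nonneg hr 3]
    _ ≤ (q - p) * r ^ 2 - ∑ c ∈ T, ∫ x in p..q, parabolicBump r c x := by
        gcongr with c; exact integral_parabolicBump_le hr c hpq
    _ = ∫ x in p..q, (r ^ 2 - ∑ c ∈ T, parabolicBump r c x) := by
        rw [intervalIntegral.integral_sub intervalIntegrable_const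
            (by apply Continuous.intervalIntegrable; fun_prop),
          intervalIntegral.integral_finsetSum hbumps, intervalIntegral.integral_const, smul_eq_mul]
    _ ≤ ∫ x in p..q, S.inf' hS (fun c => (x - c) ^ 2) :=
        intervalIntegral.integral_mono_on hpq (by apply Continuous.intervalIntegrable; fun_prop)
          (by apply Continuous.intervalIntegrable; fun_prop)
          fun x hx => sq_sub_sum_parabolicBump_le_inf' hS hr hx hT

lemma sq_sub_le_inf'_sq_sub {t x : ℝ} (hSt : ∀ c ∈ S, t ≤ c) (hx : x ≤ t) :
    (x - t) ^ 2 ≤ S.inf' hS (fun c => (x - c) ^ 2) :=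
  Finset.le_inf' hS _ fun c hc => by nlinarith [hSt c hc]

lemma le_integral_inf'_sq_sub_of_le {a b t : ℝ} (hab : a ≤ b) (hbt : b ≤ t)
    (hSt : ∀ c ∈ S, t ≤ c) :
    ((t - a) ^ 3 - (t - b) ^ 3) / 3 ≤ ∫ x in a..b, S.inf' hS (fun c => (x - c) ^ 2) := by
  have hsq : ∫ x in a..b, (x - t) ^ 2 = ((t - a) ^ 3 - (t - b) ^ 3) / 3 := by
    rw [intervalIntegral.integral_comp_sub_right (fun x => x ^ 2), integral_pow]
    ring
  rw [← hsq]
  exact intervalIntegral.integral_mono_on hab (by apply Continuous.intervalIntegrable; fun_prop)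
    (by apply Continuous.intervalIntegrable; fun_prop)
    fun x hx => sq_sub_le_inf'_sq_sub hS hSt (hx.2.trans hbt)

lemma integral_inf'_sq_sub_of_nearest {a b c : ℝ} (hab : a ≤ b) (hc : c ∈ S)
    (hnearest : ∀ x ∈ Icc a b, ∀ d ∈ S, (x - c) ^ 2 ≤ (x - d) ^ 2) :
    ∫ x in a..b, S.inf' hS (fun d => (x - d) ^ 2) = ((b - c) ^ 3 - (a - c) ^ 3) / 3 := by
  have hinf :
      EqOn (fun x => S.inf' hS (fun d => (x - d) ^ 2)) (fun x => (x - c) ^ 2) (uIcc a b) :=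
    fun x hx => le_antisymm (Finset.inf'_le _ hc)
      (Finset.le_inf' hS _ (hnearest x (by rwa [uIcc_of_le hab] at hx)))
  rw [intervalIntegral.integral_congr hinf,
    intervalIntegral.integral_comp_sub_right (fun x => x ^ 2), integral_pow]
  norm_num

end

lemma distortion_eq_integral_inf' (P : Measure ℝ) {γ : Finset ℝ} (hγ : γ.Nonempty) :
    distortion P γ = ∫ x, γ.inf' hγ (fun c => (x - c) ^ 2) ∂P := by
  simp only [distortion, Finset.inf'_eq_csInf_image]

lemma integrable_unif {f : ℝ → ℝ} {a b : ℝ} (hab : a < b) (hf : IntegrableOn f (Icc a b)) :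
    Integrable f (unif a b) :=
  hf.smul_measure (ENNReal.inv_ne_top.2 (ENNReal.ofReal_pos.2 (sub_pos.2 hab)).ne')

lemma integral_unif (f : ℝ → ℝ) {a b : ℝ} (hab : a ≤ b) :
    ∫ x, f x ∂unif a b = (b - a)⁻¹ * ∫ x in a..b, f x := by
  rw [unif, integral_smul_measure, ENNReal.toReal_inv, ENNReal.toReal_ofReal (sub_nonneg.2 hab),
    integral_Icc_eq_integral_Ioc, intervalIntegral.integral_of_le hab, smul_eq_mul]

lemma integral_mix {P₁ P₂ : Measure ℝ} {p : ℝ} (hp₀ : 0 ≤ p) (hp₁ : p ≤ 1) {f : ℝ → ℝ}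
    (h₁ : Integrable f P₁) (h₂ : Integrable f P₂) :
    ∫ x, f x ∂mix p P₁ P₂ = p * ∫ x, f x ∂P₁ + (1 - p) * ∫ x, f x ∂P₂ := by
  rw [mix, integral_add_measure (h₁.smul_measure ENNReal.ofReal_ne_top)
      (h₂.smul_measure ENNReal.ofReal_ne_top), integral_smul_measure, integral_smul_measure,
    ENNReal.toReal_ofReal hp₀, ENNReal.toReal_ofReal (sub_nonneg.2 hp₁), smul_eq_mul, smul_eq_mul]

lemma distortion_mix_unif {γ : Finset ℝ} (hγ : γ.Nonempty) {p a b a' b' : ℝ} (hp₀ : 0 ≤ p)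
    (hp₁ : p ≤ 1) (hab : a < b) (hab' : a' < b') :
    distortion (mix p (unif a b) (unif a' b')) γ
      = p * (b - a)⁻¹ * (∫ x in a..b, γ.inf' hγ (fun c => (x - c) ^ 2))
        + (1 - p) * (b' - a')⁻¹ * ∫ x in a'..b', γ.inf' hγ (fun c => (x - c) ^ 2) := by
  have hcont := continuous_inf'_sq_sub hγ
  rw [distortion_eq_integral_inf' _ hγ,
    integral_mix hp₀ hp₁ (integrable_unif hab hcont.integrableOn_Icc)
      (integrable_unif hab' hcont.integrableOn_Icc),
    integral_unif _ hab.le, integral_unif _ hab'.le]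
  ring

lemma distortion_one_sixth_three_quarters_eleven_twelfths :
    distortion (mix (1/100) (unif 0 (1/3)) (unif (2/3) 1)) {1/6, 3/4, 11/12} = 103 / 43200 := by
  have hγ : ({1/6, 3/4, 11/12} : Finset ℝ).Nonempty := Finset.insert_nonempty _ _
  have hint (a b : ℝ) : IntervalIntegrable
      (fun x => ({1/6, 3/4, 11/12} : Finset ℝ).inf' hγ (fun c => (x - c) ^ 2)) volume a b :=
    (continuous_inf'_sq_sub hγ).intervalIntegrable a b
  rw [distortion_mix_unif hγ (by norm_num) (by norm_num) (by norm_num) (by norm_num),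
    ← intervalIntegral.integral_add_adjacent_intervals (a := 2/3) (b := 5/6) (c := 1)
      (hint _ _) (hint _ _),
    integral_inf'_sq_sub_of_nearest hγ (a := 0) (b := 1/3) (c := 1/6) (by norm_num) (by simp) ?_,
    integral_inf'_sq_sub_of_nearest hγ (a := 2/3) (b := 5/6) (c := 3/4) (by norm_num) (by simp)
      ?_,
    integral_inf'_sq_sub_of_nearest hγ (a := 5/6) (b := 1) (c := 11/12) (by norm_num) (by simp)
      ?_]
  · norm_num
  all_goals
    intro x hx d hd
    simp only [Finset.mem_insert, Finset.mem_singleton] at hd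
    rcases hd with rfl | rfl | rfl <;> nlinarith [hx.1, hx.2]

lemma le_distortion_of_card_le_three {γ : Finset ℝ} (hγ : γ.Nonempty) (hcard : #γ ≤ 3) :
    103 / 43200 ≤ distortion (mix (1/100) (unif 0 (1/3)) (unif (2/3) 1)) γ := by
  rw [distortion_mix_unif hγ (by norm_num) (by norm_num) (by norm_num) (by norm_num)]
  set IL := ∫ x in (0:ℝ)..1/3, γ.inf' hγ (fun c => (x - c) ^ 2)
  set IR := ∫ x in (2/3:ℝ)..1, γ.inf' hγ (fun c => (x - c) ^ 2)
  -- windows of radius `≤ 1/6` around `[0, 1/3]` and `≤ 1/12` around `[2/3, 1]` stay on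
  -- their own side of `7/12`
  set L := γ.filter (· ≤ 7/12)
  set R := γ.filter (¬ · ≤ 7/12)
  have hLR : #L + #R = #γ := Finset.card_filter_add_card_filter_not _
  have hIL (r : ℝ) (k : ℕ) (h₀ : 0 ≤ r) (h₁ : r ≤ 1/6) (hk : #L ≤ k) :
      1/3 * r ^ 2 - 4/3 * k * r ^ 3 ≤ IL := by
    simpa only [sub_zero] using le_integral_inf'_sq_sub hγ (p := 0) (q := 1/3) (by norm_num)
      h₀ (fun c hc _ hc' => Finset.mem_filter.2 ⟨hc, by linarith⟩) hk
  have hIR (r : ℝ) (k : ℕ) (h₀ : 0 ≤ r) (h₁ : r ≤ 1/12) (hk : #R ≤ k) :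
      1/3 * r ^ 2 - 4/3 * k * r ^ 3 ≤ IR := by
    convert le_integral_inf'_sq_sub hγ (p := 2/3) (q := 1) (by norm_num) h₀
      (fun c hc hc' _ => Finset.mem_filter.2 ⟨hc, by linarith⟩) hk using 3
    norm_num
  have hIL₀ : 0 ≤ IL := intervalIntegral.integral_nonneg (by norm_num) fun x _ =>
    Finset.le_inf' hγ _ fun c _ => sq_nonneg (x - c)
  obtain hL | hL | hL | hL : #L = 0 ∨ #L = 1 ∨ #L = 2 ∨ #L = 3 := by omega
  · have hleft := le_integral_inf'_sq_sub_of_le hγ (a := 0) (b := 1/3) (t := 7/12) (by norm_num)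
      (by norm_num) fun c hc =>
        (not_le.1 (Finset.filter_eq_empty_iff.1 (Finset.card_eq_zero.1 hL) hc)).le
    have hright := le_integral_inf'_sq_sub hγ (p := 2/3) (q := 1) (r := 1/18) (by norm_num)
      (by norm_num) (fun c hc _ _ => hc) hcard
    norm_num at hleft hright ⊢; linarith
  · have hleft := hIL (1/6) 1 (by norm_num) le_rfl hL.le
    have hright := hIR (1/12) 2 (by norm_num) le_rfl (by omega)
    norm_num at hleft hright ⊢; linarith
  · have hleft := hIL (1/12) 2 (by norm_num) (by norm_num) hL.le
    have hright := hIR (1/12) 1 (by norm_num) le_rfl (by omega)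
    norm_num at hleft hright ⊢; linarith
  · have hright := hIR (1/12) 0 (by norm_num) le_rfl (by omega)
    norm_num at hright ⊢; linarith

theorem stmt7 :
    IsOptimal (mix (1/100) (unif 0 (1/3)) (unif (2/3) 1)) 3 {1/6, 3/4, 11/12} ∧
    quantErr (mix (1/100) (unif 0 (1/3)) (unif (2/3) 1)) 3 = 103 / 43200 := by
  have hne : ({1/6, 3/4, 11/12} : Finset ℝ).Nonempty := Finset.insert_nonempty _ _
  have hleast : IsLeast {v | ∃ γ : Finset ℝ, γ.Nonempty ∧ γ.card ≤ 3 ∧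
      v = distortion (mix (1/100) (unif 0 (1/3)) (unif (2/3) 1)) γ} (103 / 43200) :=
    ⟨⟨_, hne, Finset.card_le_three, distortion_one_sixth_three_quarters_eleven_twelfths.symm⟩,
      fun _ ⟨_, hγ, hcard, hv⟩ => hv ▸ le_distortion_of_card_le_three hγ hcard⟩
  have hquant : quantErr (mix (1/100) (unif 0 (1/3)) (unif (2/3) 1)) 3 = 103 / 43200 :=
    hleast.csInf_eq
  exact ⟨⟨hne, Finset.card_le_three,
    distortion_one_sixth_three_quarters_eleven_twelfths.trans hquant.symm⟩, hquant⟩
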